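/- Let f : ℝ^n → ℝ be locally Lipschitz and x, x' ∈ ℝ^n. Then there exist y on the segment [x, x'] and w in the Clarke generalized gradient ∂f(y) such that f(x') - f(x) = ⟨w, x' - x⟩. -/

import Mathlib

/-!
With `v = x' - x` and `c = f x' - f x`, the function `t ↦ f (x + t • v) - t * c` takes the same
value at `0` and `1`, so it has a local extremum at some `t₀ ∈ (0, 1)`. Comparing its values at
`t₀` and `t₀ ± s` gives difference quotients of `f` near `y = x + t₀ • v` that are `≥ c` in
direction `v` and `≥ -c` in direction `-v`, so `c ≤ f°(y; v)` and `-c ≤ f°(y; -v)`. As `f°(y; ·)`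
is sublinear, Hahn–Banach extends `a • v ↦ a * c` to a linear functional below it, and its Riesz
representative is the required `w ∈ ∂f(y)`.
-/

open Filter Topology

/-- Clarke generalized directional derivative of `f` at `x` in direction `v`. -/
noncomputable def clarkeDeriv {n : ℕ} (f : EuclideanSpace ℝ (Fin n) → ℝ)
    (x v : EuclideanSpace ℝ (Fin n)) : ℝ :=
  Filter.limsup (fun p : EuclideanSpace ℝ (Fin n) × ℝ => (f (p.1 + p.2 • v) - f p.1) / p.2)
    ((𝓝 x) ×ˢ (𝓝[>] (0 : ℝ)))

/-- Clarke generalized gradient of `f` at `x`. -/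
def clarkeGradient {n : ℕ} (f : EuclideanSpace ℝ (Fin n) → ℝ) (x : EuclideanSpace ℝ (Fin n)) :
    Set (EuclideanSpace ℝ (Fin n)) :=
  {ζ | ∀ v, (inner ℝ ζ v : ℝ) ≤ clarkeDeriv f x v}

theorem map_mul_left_nhdsGT_zero {c : ℝ} (hc : 0 < c) : map (c * ·) (𝓝[>] (0 : ℝ)) = 𝓝[>] 0 := by
  simpa [Set.image_mul_left_Ioi hc] using
    (Homeomorph.mulLeft₀ c hc.ne').isEmbedding.map_nhdsWithin_eq (Set.Ioi 0) 0

theorem exists_inner_eq_of_le_sublinear {F : Type*} [NormedAddCommGroup F] [InnerProductSpace ℝ F]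
    [FiniteDimensional ℝ F] {N : F → ℝ} (N_hom : ∀ a : ℝ, 0 < a → ∀ u, N (a • u) = a * N u)
    (N_add : ∀ u u', N (u + u') ≤ N u + N u') {v : F} {c : ℝ} (hv : c ≤ N v)
    (hv' : -c ≤ N (-v)) : ∃ w : F, (∀ u, inner ℝ w u ≤ N u) ∧ inner ℝ w v = c := by
  have N_zero : N 0 = 0 := by
    have h := N_hom 2 two_pos 0
    rw [smul_zero] at h
    linarith
  have hc : ∀ a : ℝ, a • v = 0 → a • c = 0 := by
    intro a ha
    rcases smul_eq_zero.1 ha with rfl | rfl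
    · exact zero_smul ℝ c
    · rw [N_zero] at hv; rw [neg_zero, N_zero] at hv'
      rw [le_antisymm hv (by linarith), smul_zero]
  have hdom : ∀ u : (LinearPMap.mkSpanSingleton' (σ := RingHom.id ℝ) v c hc).domain,
      LinearPMap.mkSpanSingleton' (σ := RingHom.id ℝ) v c hc u ≤ N u := by
    rintro ⟨u, hu⟩
    obtain ⟨a, rfl⟩ := Submodule.mem_span_singleton.1 hu
    rw [LinearPMap.mkSpanSingleton'_apply, RingHom.id_apply, smul_eq_mul]
    change a * c ≤ N (a • v)
    rcases lt_trichotomy a 0 with ha | rfl | ha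
    · rw [← neg_smul_neg, N_hom _ (neg_pos.2 ha)]
      nlinarith
    · simp [N_zero]
    · rw [N_hom a ha]
      exact mul_le_mul_of_nonneg_left hv ha.le
  obtain ⟨g, hgv, hgN⟩ := exists_extension_of_le_sublinear _ N N_hom N_add hdom
  refine ⟨(InnerProductSpace.toDual ℝ F).symm (LinearMap.toContinuousLinearMap g), fun u => ?_, ?_⟩
  · rw [InnerProductSpace.toDual_symm_apply]
    exact hgN u
  · rw [InnerProductSpace.toDual_symm_apply]
    exact (hgv ⟨v, Submodule.mem_span_singleton_self v⟩).trans
      (LinearPMap.mkSpanSingleton'_apply_self v c hc _)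

section DiffQuot

variable {E : Type*} [NormedAddCommGroup E] [NormedSpace ℝ E]

noncomputable def diffQuot (f : E → ℝ) (v : E) (p : E × ℝ) : ℝ :=
  (f (p.1 + p.2 • v) - f p.1) / p.2

theorem diffQuot_add (f : E → ℝ) (u v : E) (p : E × ℝ) :
    diffQuot f (u + v) p = diffQuot f u (p.1 + p.2 • v, p.2) + diffQuot f v p := by
  simp only [diffQuot, ← add_div, sub_add_sub_cancel, smul_add, add_right_comm, add_assoc]

theorem diffQuot_smul (f : E → ℝ) (v : E) (c : ℝ) (p : E × ℝ) :
    diffQuot f (c • v) p = c * diffQuot f v (p.1, c * p.2) := by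
  rcases eq_or_ne c 0 with rfl | hc
  · simp [diffQuot]
  · simp only [diffQuot, smul_smul, mul_comm p.2 c, mul_div_assoc', mul_div_mul_left _ _ hc]

theorem tendsto_fst_add_snd_smul (y v : E) :
    Tendsto (fun p : E × ℝ => p.1 + p.2 • v) (𝓝 y ×ˢ 𝓝[>] 0) (𝓝 y) := by
  have hs : Tendsto (fun p : E × ℝ => p.2) (𝓝 y ×ˢ 𝓝[>] 0) (𝓝 0) :=
    tendsto_snd.mono_right nhdsWithin_le_nhds
  simpa using tendsto_fst.add (hs.smul_const v)

theorem LocallyLipschitz.isBoundedUnder_abs_diffQuot {f : E → ℝ} (hf : LocallyLipschitz f)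
    (y v : E) : IsBoundedUnder (· ≤ ·) (𝓝 y ×ˢ 𝓝[>] (0 : ℝ)) fun p => |diffQuot f v p| := by
  obtain ⟨K, t, ht, hK⟩ := hf y
  refine isBoundedUnder_of_eventually_le (a := K * ‖v‖) ?_
  filter_upwards [tendsto_fst.eventually ht, (tendsto_fst_add_snd_smul y v).eventually ht,
    tendsto_snd.eventually (self_mem_nhdsWithin : Set.Ioi (0 : ℝ) ∈ 𝓝[>] 0)]
    with p hp hp' (hs : 0 < p.2)
  have hdist := hK.dist_le_mul _ hp' _ hp
  rw [Real.dist_eq, dist_eq_norm, add_sub_cancel_left, norm_smul,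
    Real.norm_of_nonneg hs.le] at hdist
  rw [diffQuot, abs_div, abs_of_pos hs, div_le_iff₀ hs]
  linarith

end DiffQuot

section Clarke

variable {n : ℕ} {f : EuclideanSpace ℝ (Fin n) → ℝ}

theorem clarkeDeriv_eq_limsup_diffQuot (f : EuclideanSpace ℝ (Fin n) → ℝ)
    (y v : EuclideanSpace ℝ (Fin n)) :
    clarkeDeriv f y v = limsup (diffQuot f v) (𝓝 y ×ˢ 𝓝[>] 0) :=
  rfl

namespace LocallyLipschitz

theorem clarkeDeriv_smul (hf : LocallyLipschitz f) (y v : EuclideanSpace ℝ (Fin n)) {c : ℝ}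
    (hc : 0 < c) : clarkeDeriv f y (c • v) = c * clarkeDeriv f y v := by
  have hmap : map (Prod.map id (c * ·)) (𝓝 y ×ˢ 𝓝[>] 0) = 𝓝 y ×ˢ 𝓝[>] (0 : ℝ) := by
    rw [← prod_map_map_eq', map_id, map_mul_left_nhdsGT_zero hc]
  have hdq : diffQuot f (c • v) = ((c * ·) ∘ diffQuot f v) ∘ Prod.map id (c * ·) :=
    funext (diffQuot_smul f v c)
  obtain ⟨hle, hge⟩ := isBoundedUnder_le_abs.1 (hf.isBoundedUnder_abs_diffQuot y v)
  rw [clarkeDeriv_eq_limsup_diffQuot, hdq, limsup_comp, hmap]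
  exact (Monotone.map_limsup_of_continuousAt (monotone_mul_left_of_nonneg hc.le) _
    (continuous_const_mul c).continuousAt hle hge.isCoboundedUnder_le).symm

theorem clarkeDeriv_add_le (hf : LocallyLipschitz f) (y u v : EuclideanSpace ℝ (Fin n)) :
    clarkeDeriv f y (u + v) ≤ clarkeDeriv f y u + clarkeDeriv f y v := by
  set l := 𝓝 y ×ˢ 𝓝[>] (0 : ℝ)
  set m : EuclideanSpace ℝ (Fin n) × ℝ → EuclideanSpace ℝ (Fin n) × ℝ :=
    fun p => (p.1 + p.2 • v, p.2)
  have hm : Tendsto m l l := (tendsto_fst_add_snd_smul y v).prodMk tendsto_snd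
  obtain ⟨hu, hu'⟩ := isBoundedUnder_le_abs.1 (hf.isBoundedUnder_abs_diffQuot y u)
  obtain ⟨hv, hv'⟩ := isBoundedUnder_le_abs.1 (hf.isBoundedUnder_abs_diffQuot y v)
  have hdq : diffQuot f (u + v) = diffQuot f u ∘ m + diffQuot f v :=
    funext (diffQuot_add f u v)
  calc clarkeDeriv f y (u + v) = limsup (diffQuot f u ∘ m + diffQuot f v) l := by
        rw [clarkeDeriv_eq_limsup_diffQuot, hdq]
    _ ≤ limsup (diffQuot f u ∘ m) l + limsup (diffQuot f v) l :=
        limsup_add_le (hm.isBoundedUnder_comp hu') (hm.isBoundedUnder_comp hu)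
          hv'.isCoboundedUnder_le hv
    _ ≤ clarkeDeriv f y u + clarkeDeriv f y v := by
        refine add_le_add (hm.limsup_comp_le_limsup ?_ hu) le_rfl
        exact (isBoundedUnder_map_iff.2 (hm.isBoundedUnder_comp hu')).isCoboundedUnder_le

theorem le_clarkeDeriv_of_tendsto (hf : LocallyLipschitz f) {y v : EuclideanSpace ℝ (Fin n)}
    {c : ℝ} {path : ℝ → EuclideanSpace ℝ (Fin n) × ℝ}
    (hpath : Tendsto path (𝓝[>] 0) (𝓝 y ×ˢ 𝓝[>] 0))
    (h : ∀ᶠ s in 𝓝[>] 0, c ≤ diffQuot f v (path s)) : c ≤ clarkeDeriv f y v :=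
  le_limsup_of_frequently_le (hpath.frequently h.frequently)
    (isBoundedUnder_le_abs.1 (hf.isBoundedUnder_abs_diffQuot y v)).1

theorem le_clarkeDeriv_of_isLocalMin (hf : LocallyLipschitz f) {x v : EuclideanSpace ℝ (Fin n)}
    {c t₀ : ℝ} (h : IsLocalMin (fun t => f (x + t • v) - t * c) t₀) :
    c ≤ clarkeDeriv f (x + t₀ • v) v := by
  refine hf.le_clarkeDeriv_of_tendsto (path := fun s => (x + t₀ • v, s))
    (tendsto_const_nhds.prodMk tendsto_id) ?_
  have hright : Tendsto (fun s : ℝ => t₀ + s) (𝓝[>] 0) (𝓝 t₀) :=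
    ((continuous_const.add continuous_id).tendsto' 0 t₀ (add_zero t₀)).mono_left
      nhdsWithin_le_nhds
  filter_upwards [hright.eventually h, self_mem_nhdsWithin] with s hs (hs0 : 0 < s)
  rw [diffQuot, le_div_iff₀ hs0]
  simp only [add_smul, ← add_assoc] at hs
  linarith

theorem le_clarkeDeriv_of_isLocalMax (hf : LocallyLipschitz f) {x v : EuclideanSpace ℝ (Fin n)}
    {c t₀ : ℝ} (h : IsLocalMax (fun t => f (x + t • v) - t * c) t₀) :
    c ≤ clarkeDeriv f (x + t₀ • v) v := by
  have hpath : Tendsto (fun s : ℝ => (x + t₀ • v - s • v, s)) (𝓝[>] 0)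
      (𝓝 (x + t₀ • v) ×ˢ 𝓝[>] 0) := by
    refine Tendsto.prodMk ?_ tendsto_id
    have hs : Tendsto (fun s : ℝ => s) (𝓝[>] 0) (𝓝 0) := tendsto_id.mono_left nhdsWithin_le_nhds
    simpa using tendsto_const_nhds.sub (hs.smul_const v)
  refine hf.le_clarkeDeriv_of_tendsto hpath ?_
  have hleft : Tendsto (fun s : ℝ => t₀ - s) (𝓝[>] 0) (𝓝 t₀) :=
    ((continuous_const.sub continuous_id).tendsto' 0 t₀ (sub_zero t₀)).mono_left
      nhdsWithin_le_nhds
  filter_upwards [hleft.eventually h, self_mem_nhdsWithin] with s hs (hs0 : 0 < s)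
  rw [diffQuot, sub_add_cancel, le_div_iff₀ hs0]
  simp only [sub_smul, ← add_sub_assoc] at hs
  linarith

theorem le_clarkeDeriv_of_isLocalExtr (hf : LocallyLipschitz f) {x v : EuclideanSpace ℝ (Fin n)}
    {c t₀ : ℝ} (h : IsLocalExtr (fun t => f (x + t • v) - t * c) t₀) :
    c ≤ clarkeDeriv f (x + t₀ • v) v :=
  h.elim hf.le_clarkeDeriv_of_isLocalMin hf.le_clarkeDeriv_of_isLocalMax

theorem neg_le_clarkeDeriv_neg_of_isLocalExtr (hf : LocallyLipschitz f)
    {x v : EuclideanSpace ℝ (Fin n)} {c t₀ : ℝ}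
    (h : IsLocalExtr (fun t => f (x + t • v) - t * c) t₀) :
    -c ≤ clarkeDeriv f (x + t₀ • v) (-v) := by
  have hneg : IsLocalExtr (fun t => f (x + t • -v) - t * -c) (-t₀) := by
    rw [← neg_neg t₀] at h
    simpa [Function.comp_def] using h.comp_continuous continuous_neg.continuousAt
  simpa using hf.le_clarkeDeriv_of_isLocalExtr hneg

theorem exists_mem_clarkeGradient_inner_eq (hf : LocallyLipschitz f)
    {y v : EuclideanSpace ℝ (Fin n)} {c : ℝ} (hv : c ≤ clarkeDeriv f y v)
    (hv' : -c ≤ clarkeDeriv f y (-v)) : ∃ w ∈ clarkeGradient f y, inner ℝ w v = c :=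
  exists_inner_eq_of_le_sublinear (fun _ ha u => hf.clarkeDeriv_smul y u ha)
    (hf.clarkeDeriv_add_le y) hv hv'

end LocallyLipschitz

end Clarke

/-- Lebourg's mean value theorem. -/
theorem stmt7 {n : ℕ} (f : EuclideanSpace ℝ (Fin n) → ℝ) (hf : LocallyLipschitz f)
    (x x' : EuclideanSpace ℝ (Fin n)) :
    ∃ y ∈ segment ℝ x x', ∃ w ∈ clarkeGradient f y, f x' - f x = (inner ℝ w (x' - x) : ℝ) := by
  set v := x' - x
  set φ : ℝ → ℝ := fun t => f (x + t • v) - t * (f x' - f x)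
  have hφ : ContinuousOn φ (Set.Icc 0 1) := by
    have := hf.continuous
    fun_prop
  have hφ01 : φ 0 = φ 1 := by simp [φ, v]
  obtain ⟨t₀, ht₀, hextr⟩ := exists_isLocalExtr_Ioo zero_lt_one hφ hφ01
  obtain ⟨w, hw, hwv⟩ := hf.exists_mem_clarkeGradient_inner_eq
    (hf.le_clarkeDeriv_of_isLocalExtr hextr) (hf.neg_le_clarkeDeriv_neg_of_isLocalExtr hextr)
  refine ⟨x + t₀ • v, ?_, w, hw, hwv.symm⟩
  rw [segment_eq_image']
  exact ⟨t₀, Set.Ioo_subset_Icc_self ht₀, rfl⟩
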